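/- arXiv:2305.09904 — 6 statements merged into one kernel-verified Lean document; each statement's English description precedes it below -/
import Mathlib

section
/- Let L(P,Q) = (1/2)‖Ȳ − PQᵀ‖_F² for P ∈ ℝ^{n×k}, Q ∈ ℝ^{m×k}, Ȳ ∈ ℝ^{n×m}. Then the squared Frobenius norm of the full gradient satisfies ‖∇L‖² = ‖(Ȳ − PQᵀ)Q‖_F² + ‖(Ȳ − PQᵀ)ᵀP‖_F² ≥ 2·L(P,Q)·(σ_min(P)² + σ_min(Q)²). -/
open Matrix

/-- Squared Frobenius norm of a real matrix. -/
noncomputable def frobSq {p o : ℕ} (A : Matrix (Fin p) (Fin o) ℝ) : ℝ :=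
  ∑ i, ∑ j, (A i j) ^ 2

/-- Square of the smallest singular value of `B` (acting on row vectors `v ↦ v B`). -/
noncomputable def sminSq {o q : ℕ} (B : Matrix (Fin o) (Fin q) ℝ) : ℝ :=
  sInf {c : ℝ | ∃ v : Fin o → ℝ, (∑ i, (v i) ^ 2) = 1 ∧ c = ∑ j, (∑ i, v i * B i j) ^ 2}

/-
Both gradient blocks are the residual `R = Ȳ - PQᵀ` multiplied on the right by a matrix:
`RQ` and `RᵀP`. Row by row, right multiplication by `B` shrinks squared norms by at most
`σ_min(B)²`, so `‖RQ‖² ≥ σ_min(Q)² ‖R‖²` and `‖RᵀP‖² ≥ σ_min(P)² ‖Rᵀ‖² = σ_min(P)² ‖R‖²`;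
adding the two gives the bound, since `2 L = ‖R‖²`.
-/

lemma sminSq_set_bddBelow {o q : ℕ} (B : Matrix (Fin o) (Fin q) ℝ) :
    BddBelow {c : ℝ | ∃ v : Fin o → ℝ, (∑ i, (v i) ^ 2) = 1 ∧
      c = ∑ j, (∑ i, v i * B i j) ^ 2} :=
  ⟨0, fun _ ⟨_, _, hc⟩ => hc ▸ Finset.sum_nonneg fun _ _ => sq_nonneg _⟩

lemma sminSq_le_of_sum_sq_eq_one {o q : ℕ} (B : Matrix (Fin o) (Fin q) ℝ) {v : Fin o → ℝ}
    (hv : ∑ i, v i ^ 2 = 1) : sminSq B ≤ ∑ j, (∑ i, v i * B i j) ^ 2 :=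
  csInf_le (sminSq_set_bddBelow B) ⟨v, hv, rfl⟩

lemma sminSq_mul_sum_sq_le {o q : ℕ} (B : Matrix (Fin o) (Fin q) ℝ) (v : Fin o → ℝ) :
    sminSq B * ∑ i, v i ^ 2 ≤ ∑ j, (∑ i, v i * B i j) ^ 2 := by
  set S := ∑ i, v i ^ 2
  have hS0 : 0 ≤ S := Finset.sum_nonneg fun i _ => sq_nonneg (v i)
  rcases hS0.eq_or_lt with hS | hS
  · rw [← hS, mul_zero]
    exact Finset.sum_nonneg fun _ _ => sq_nonneg _
  -- both sides are homogeneous of degree 2 in `v`, so it suffices to test `v / ‖v‖`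
  have hsqrt : Real.sqrt S ^ 2 = S := Real.sq_sqrt hS.le
  have hunit : ∑ i, (v i / Real.sqrt S) ^ 2 = 1 := by
    simp only [div_pow, hsqrt, ← Finset.sum_div]
    exact div_self hS.ne'
  have hscale : ∑ j, (∑ i, v i / Real.sqrt S * B i j) ^ 2
      = (∑ j, (∑ i, v i * B i j) ^ 2) / S := by
    simp only [div_mul_eq_mul_div, ← Finset.sum_div, div_pow, hsqrt]
  have := sminSq_le_of_sum_sq_eq_one B hunit
  rwa [hscale, le_div_iff₀ hS] at this

lemma sminSq_mul_frobSq_le_frobSq_mul {p o q : ℕ} (R : Matrix (Fin p) (Fin o) ℝ)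
    (B : Matrix (Fin o) (Fin q) ℝ) : sminSq B * frobSq R ≤ frobSq (R * B) := by
  unfold frobSq
  rw [Finset.mul_sum]
  exact Finset.sum_le_sum fun i _ => by
    simpa only [Matrix.mul_apply] using sminSq_mul_sum_sq_le B (R i)

lemma frobSq_transpose {p o : ℕ} (A : Matrix (Fin p) (Fin o) ℝ) : frobSq Aᵀ = frobSq A := by
  unfold frobSq
  rw [Finset.sum_comm]
  rfl

theorem stmt1 {n m k : ℕ} (Y : Matrix (Fin n) (Fin m) ℝ)
    (P : Matrix (Fin n) (Fin k) ℝ) (Q : Matrix (Fin m) (Fin k) ℝ) :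
    frobSq ((Y - P * Qᵀ) * Q) + frobSq ((Y - P * Qᵀ)ᵀ * P)
      ≥ 2 * ((1 : ℝ) / 2 * frobSq (Y - P * Qᵀ)) * (sminSq P + sminSq Q) := by
  set R := Y - P * Qᵀ
  have hQ : sminSq Q * frobSq R ≤ frobSq (R * Q) := sminSq_mul_frobSq_le_frobSq_mul R Q
  have hP : sminSq P * frobSq R ≤ frobSq (Rᵀ * P) := by
    simpa only [frobSq_transpose] using sminSq_mul_frobSq_le_frobSq_mul Rᵀ P
  linarith
end

section
/- Let a, b : ℝ → ℝ_{≥0} be differentiable with dynamics ȧ = 2F(a,b)·a and ḃ = −2F(a,b)·b, where F(a,b) = Ȳ − a + b and Ȳ > 0. Then the sets {(a,b) : F(a,b) > 0} and {(a,b) : F(a,b) < 0} are each forward invariant. -/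
/-! Along a solution, `F = Y - a + b` satisfies the scalar linear equation `Ḟ = -2 (a + b) F`,
so `F t = F 0 · exp (-∫₀ᵗ 2 (a + b))` and `F` keeps the sign of `F 0`. -/

open Real intervalIntegral

theorem eq_mul_exp_integral_of_hasDerivAt_mul {f g : ℝ → ℝ} (hg : Continuous g)
    (hf : ∀ t, HasDerivAt f (g t * f t) t) (t : ℝ) :
    f t = f 0 * exp (∫ s in (0 : ℝ)..t, g s) := by
  set G : ℝ → ℝ := fun t => ∫ s in (0 : ℝ)..t, g s
  have hG : ∀ t, HasDerivAt G (g t) t := fun t => (hg.integral_hasStrictDerivAt 0 t).hasDerivAt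
  have hconst : ∀ t, HasDerivAt (fun t => f t * exp (-G t)) 0 t := fun t =>
    ((hf t).mul (hG t).neg.exp).congr_deriv (by ring)
  have h := is_const_of_deriv_eq_zero (fun x => (hconst x).differentiableAt)
    (fun x => (hconst x).deriv) t 0
  have hG0 : G 0 = 0 := integral_same
  simp only [hG0, neg_zero, exp_zero, mul_one] at h
  rw [← h, mul_assoc, ← exp_add, neg_add_cancel, exp_zero, mul_one]

theorem stmt5_general (Y : ℝ) (a b : ℝ → ℝ)
    (ha : ∀ t, HasDerivAt a (2 * (Y - a t + b t) * a t) t)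
    (hb : ∀ t, HasDerivAt b (-2 * (Y - a t + b t) * b t) t) :
    ((0 < Y - a 0 + b 0) → ∀ t ≥ (0 : ℝ), 0 < Y - a t + b t) ∧
    ((Y - a 0 + b 0 < 0) → ∀ t ≥ (0 : ℝ), Y - a t + b t < 0) := by
  have hrate : Continuous fun t => -2 * (a t + b t) :=
    continuous_const.mul ((continuous_iff_continuousAt.2 fun t => (ha t).continuousAt).add
      (continuous_iff_continuousAt.2 fun t => (hb t).continuousAt))
  have hF : ∀ t, HasDerivAt (fun t => Y - a t + b t) (-2 * (a t + b t) * (Y - a t + b t)) t :=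
    fun t => (((hasDerivAt_const t Y).sub (ha t)).add (hb t)).congr_deriv (by ring)
  have hsol := eq_mul_exp_integral_of_hasDerivAt_mul hrate hF
  refine ⟨fun h0 t _ => ?_, fun h0 t _ => ?_⟩
  · rw [hsol t]
    exact mul_pos h0 (exp_pos _)
  · rw [hsol t]
    exact mul_neg_of_neg_of_pos h0 (exp_pos _)

theorem stmt5 (Y : ℝ) (hY : 0 < Y) (a b : ℝ → ℝ)
    (ha0 : ∀ t, 0 ≤ a t) (hb0 : ∀ t, 0 ≤ b t)
    (ha : ∀ t, HasDerivAt a (2 * (Y - a t + b t) * a t) t)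
    (hb : ∀ t, HasDerivAt b (-2 * (Y - a t + b t) * b t) t) :
    ((0 < Y - a 0 + b 0) → ∀ t ≥ (0 : ℝ), 0 < Y - a t + b t) ∧
    ((Y - a 0 + b 0 < 0) → ∀ t ≥ (0 : ℝ), Y - a t + b t < 0) :=
  stmt5_general Y a b ha hb
end

section
/- Let a, b : ℝ → ℝ_{≥0} satisfy ȧ = 2F(a,b)a, ḃ = −2F(a,b)b with F(a,b) = Ȳ − a + b, Ȳ > 0. If F(a(0),b(0)) > 0 and a(0) > 0, then a(t) is strictly increasing and bounded above, b(t) is non-increasing, and (a(t),b(t)) converges to a point (a_ss, b_ss) with a_ss > 0 and F(a_ss, b_ss) = 0. -/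
/-!
Along the flow the gap `F = Y - a + b` satisfies the linear equation `F' = -2 (a + b) F`, and
`a' = 2 F a` is linear in `a` as well; solutions of linear equations keep their sign, so `F > 0`
and `a > 0` for all time. Hence `a` increases, `b` decreases, and `a < Y + b ≤ Y + b(0)`, so both
converge. Since `a` converges, its derivative `2 F a` cannot tend to a nonzero limit, which
forces the limit of `F` to vanish.
-/

open Set Filter Topology Real

theorem eq_mul_exp_integral_of_hasDerivAt_mul_self {f c : ℝ → ℝ} (hc : Continuous c)
    (hf : ∀ t, HasDerivAt f (c t * f t) t) (t : ℝ) :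
    f t = f 0 * exp (∫ s in (0 : ℝ)..t, c s) := by
  set I : ℝ → ℝ := fun t => ∫ s in (0 : ℝ)..t, c s
  have hI : ∀ t, HasDerivAt I (c t) t := fun t => (hc.integral_hasStrictDerivAt 0 t).hasDerivAt
  have hconst : ∀ s, HasDerivAt (fun s => f s * exp (-I s)) 0 s := fun s =>
    ((hf s).mul (hI s).neg.exp).congr_deriv (by ring)
  have key := is_const_of_deriv_eq_zero (fun t => (hconst t).differentiableAt)
    (fun t => (hconst t).deriv) t 0
  simp only [I, intervalIntegral.integral_same, neg_zero, exp_zero, mul_one] at key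
  rw [← key, mul_assoc, ← exp_add, neg_add_cancel, exp_zero, mul_one]

theorem pos_of_hasDerivAt_mul_self {f c : ℝ → ℝ} (hc : Continuous c)
    (hf : ∀ t, HasDerivAt f (c t * f t) t) (h0 : 0 < f 0) (t : ℝ) : 0 < f t := by
  rw [eq_mul_exp_integral_of_hasDerivAt_mul_self hc hf t]
  positivity

theorem eq_zero_of_tendsto_of_tendsto_deriv {f f' : ℝ → ℝ} {l m : ℝ}
    (hf : ∀ t, HasDerivAt f (f' t) t) (hfl : Tendsto f atTop (𝓝 l))
    (hf'm : Tendsto f' atTop (𝓝 m)) : m = 0 := by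
  have hmvt : ∀ t, ∃ ξ ∈ Ioo t (t + 1), f' ξ = (f (t + 1) - f t) / (t + 1 - t) := fun t =>
    exists_hasDerivAt_eq_slope f f' (lt_add_one t)
      (fun x _ => (hf x).continuousAt.continuousWithinAt) (fun x _ => hf x)
  choose ξ hξ hξf' using hmvt
  have hξ_top : Tendsto ξ atTop atTop :=
    tendsto_atTop_mono (fun t => (hξ t).1.le) tendsto_id
  have hdiff : Tendsto (fun t => f (t + 1) - f t) atTop (𝓝 (l - l)) :=
    (hfl.comp (tendsto_atTop_add_const_right _ 1 tendsto_id)).sub hfl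
  refine tendsto_nhds_unique (hf'm.comp hξ_top) ?_
  simpa [Function.comp_def, hξf'] using hdiff

theorem hasDerivAt_gap {Y : ℝ} {a b : ℝ → ℝ}
    (ha : ∀ t, HasDerivAt a (2 * (Y - a t + b t) * a t) t)
    (hb : ∀ t, HasDerivAt b (-2 * (Y - a t + b t) * b t) t) (t : ℝ) :
    HasDerivAt (fun t => Y - a t + b t) (-2 * (a t + b t) * (Y - a t + b t)) t := by
  refine (((hasDerivAt_const t Y).sub (ha t)).add (hb t)).congr_deriv ?_
  ring

theorem stmt6_general (Y : ℝ) (a b : ℝ → ℝ)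
    (hb0 : ∀ t, 0 ≤ b t)
    (ha : ∀ t, HasDerivAt a (2 * (Y - a t + b t) * a t) t)
    (hb : ∀ t, HasDerivAt b (-2 * (Y - a t + b t) * b t) t)
    (hF0 : 0 < Y - a 0 + b 0) (hapos : 0 < a 0) :
    StrictMonoOn a (Set.Ici 0) ∧ (∃ M : ℝ, ∀ t ≥ (0 : ℝ), a t ≤ M) ∧
    AntitoneOn b (Set.Ici 0) ∧
    ∃ ass bss : ℝ, 0 < ass ∧ Y - ass + bss = 0 ∧
      Filter.Tendsto a Filter.atTop (nhds ass) ∧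
      Filter.Tendsto b Filter.atTop (nhds bss) := by
  have hac : Continuous a := continuous_iff_continuousAt.2 fun t => (ha t).continuousAt
  have hbc : Continuous b := continuous_iff_continuousAt.2 fun t => (hb t).continuousAt
  have hF : ∀ t, 0 < Y - a t + b t :=
    pos_of_hasDerivAt_mul_self (by fun_prop) (hasDerivAt_gap ha hb) hF0
  have hpos : ∀ t, 0 < a t := pos_of_hasDerivAt_mul_self (by fun_prop) ha hapos
  have hmono : StrictMono a :=
    strictMono_of_hasDerivAt_pos ha fun t => by have := hF t; have := hpos t; positivity
  have hanti : Antitone b :=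
    antitone_of_hasDerivAt_nonpos hb fun t => by rw [Pi.zero_apply]; nlinarith [hF t, hb0 t]
  have hbound : ∀ t, a t ≤ Y + b 0 := fun t => by
    linarith [hmono.monotone (le_max_left t 0), hF (max t 0), hanti (le_max_right t 0)]
  have halim :=
    tendsto_atTop_ciSup hmono.monotone ⟨Y + b 0, by rintro _ ⟨t, rfl⟩; exact hbound t⟩
  have hblim := tendsto_atTop_ciInf hanti ⟨0, by rintro _ ⟨t, rfl⟩; exact hb0 t⟩
  set ass := ⨆ t, a t
  set bss := ⨅ t, b t
  have hass : 0 < ass :=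
    hapos.trans_le (ge_of_tendsto halim (eventually_atTop.2 ⟨0, fun t ht => hmono.monotone ht⟩))
  have hderiv_lim : Tendsto (fun t => 2 * (Y - a t + b t) * a t) atTop
      (𝓝 (2 * (Y - ass + bss) * ass)) :=
    (((tendsto_const_nhds.sub halim).add hblim).const_mul 2).mul halim
  have hgap : Y - ass + bss = 0 := by
    simpa [hass.ne'] using eq_zero_of_tendsto_of_tendsto_deriv ha halim hderiv_lim
  exact ⟨hmono.strictMonoOn _, ⟨Y + b 0, fun t _ => hbound t⟩, hanti.antitoneOn _,
    ass, bss, hass, hgap, halim, hblim⟩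

theorem stmt6 (Y : ℝ) (hY : 0 < Y) (a b : ℝ → ℝ)
    (ha0 : ∀ t, 0 ≤ a t) (hb0 : ∀ t, 0 ≤ b t)
    (ha : ∀ t, HasDerivAt a (2 * (Y - a t + b t) * a t) t)
    (hb : ∀ t, HasDerivAt b (-2 * (Y - a t + b t) * b t) t)
    (hF0 : 0 < Y - a 0 + b 0) (hapos : 0 < a 0) :
    StrictMonoOn a (Set.Ici 0) ∧ (∃ M : ℝ, ∀ t ≥ (0 : ℝ), a t ≤ M) ∧
    AntitoneOn b (Set.Ici 0) ∧
    ∃ ass bss : ℝ, 0 < ass ∧ Y - ass + bss = 0 ∧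
      Filter.Tendsto a Filter.atTop (nhds ass) ∧
      Filter.Tendsto b Filter.atTop (nhds bss) :=
  stmt6_general Y a b hb0 ha hb hF0 hapos
end

section
/- Let n = m = 1, Ȳ > 0, and 0 ≤ α < 2√Ȳ. Define R_α = {(P,Q) ∈ ℝ^{1×k} × ℝ^{1×k} : ‖P + Q‖₂² ≥ α²}. If the disturbances satisfy ‖U(t)‖₂ + ‖V(t)‖₂ ≤ (1/√2)·α·(Ȳ − α²/4) for all t, then R_α is forward invariant under the disturbed gradient flow Ṗ = (Ȳ − PQᵀ)Q + U, Q̇ = (Ȳ − PQᵀ)P + V. -/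
/-!
With `s = P + Q`, the flow gives `ṡ = (Y - ⟪P, Q⟫) s + (U + V)`, so
`d/dt ‖s‖² = 2 (Y - ⟪P, Q⟫) ‖s‖² + 2 ⟪s, U + V⟫`. On the boundary `‖s‖ = α` we have
`⟪P, Q⟫ ≤ ‖s‖² / 4 = α² / 4` (since `‖P - Q‖² ≥ 0`), and Cauchy–Schwarz together with the
disturbance bound makes the derivative strictly positive, so `‖s‖²` can never drop below `α²`.
-/

open RealInnerProductSpace

section InnerProductSpace

variable {E : Type*} [NormedAddCommGroup E] [InnerProductSpace ℝ E]

theorem real_inner_le_norm_add_sq_div_four (x y : E) : ⟪x, y⟫ ≤ ‖x + y‖ ^ 2 / 4 := by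
  have h := norm_sub_sq_real x y
  rw [norm_add_sq_real]
  nlinarith [sq_nonneg ‖x - y‖]

theorem inner_add_gradientFlow_pos {p q w : E} {Y α : ℝ} (hα : 0 < α) (hpq : ‖p + q‖ = α)
    (hw : ‖w‖ < α * (Y - α ^ 2 / 4)) : 0 < ⟪p + q, (Y - ⟪p, q⟫) • (p + q) + w⟫ := by
  have hc : ⟪p, q⟫ ≤ α ^ 2 / 4 := hpq ▸ real_inner_le_norm_add_sq_div_four p q
  have hcross : -(α * ‖w‖) ≤ ⟪p + q, w⟫ := hpq ▸ neg_le_of_abs_le (abs_real_inner_le_norm _ _)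
  rw [inner_add_right, real_inner_smul_right, real_inner_self_eq_norm_sq, hpq]
  nlinarith [mul_lt_mul_of_pos_left hw hα]

theorem hasDerivAt_norm_add_sq_of_gradientFlow {P Q U V : ℝ → E} {Y t : ℝ}
    (hP : HasDerivAt P ((Y - ⟪P t, Q t⟫) • Q t + U t) t)
    (hQ : HasDerivAt Q ((Y - ⟪P t, Q t⟫) • P t + V t) t) :
    HasDerivAt (fun s ↦ ‖P s + Q s‖ ^ 2)
      (2 * ⟪P t + Q t, (Y - ⟪P t, Q t⟫) • (P t + Q t) + (U t + V t)⟫) t := by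
  convert (hP.fun_add hQ).norm_sq using 3
  rw [smul_add]
  abel

theorem le_of_hasDerivAt_pos_of_eq {g g' : ℝ → ℝ} {a t₀ t : ℝ}
    (hg : ∀ s, HasDerivAt g (g' s) s) (hbd : ∀ s ≥ t₀, g s = a → 0 < g' s)
    (h₀ : a ≤ g t₀) (ht : t₀ ≤ t) : a ≤ g t :=
  image_le_of_deriv_right_lt_deriv_boundary continuousOn_const
    (fun _ _ ↦ hasDerivWithinAt_const _ _ a) h₀ hg (fun s hs h ↦ hbd s hs.1 h.symm) ⟨ht, le_rfl⟩

theorem sq_le_norm_add_sq_of_gradientFlow {P Q U V : ℝ → E} {Y α t₀ t : ℝ} (hα : 0 < α)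
    (hP : ∀ s, HasDerivAt P ((Y - ⟪P s, Q s⟫) • Q s + U s) s)
    (hQ : ∀ s, HasDerivAt Q ((Y - ⟪P s, Q s⟫) • P s + V s) s)
    (hUV : ∀ s, ‖U s + V s‖ < α * (Y - α ^ 2 / 4))
    (h₀ : α ^ 2 ≤ ‖P t₀ + Q t₀‖ ^ 2) (ht : t₀ ≤ t) : α ^ 2 ≤ ‖P t + Q t‖ ^ 2 := by
  refine le_of_hasDerivAt_pos_of_eq (g := fun s ↦ ‖P s + Q s‖ ^ 2)
    (fun s ↦ hasDerivAt_norm_add_sq_of_gradientFlow (hP s) (hQ s))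
    (fun s _ hs ↦ ?_) h₀ ht
  have hnorm : ‖P s + Q s‖ = α := (pow_left_inj₀ (norm_nonneg _) hα.le two_ne_zero).1 hs
  exact mul_pos two_pos (inner_add_gradientFlow_pos hα hnorm (hUV s))

end InnerProductSpace

open WithLp in
theorem HasDerivAt.toLp {ι : Type*} [Fintype ι] {f : ℝ → ι → ℝ} {f' : ι → ℝ} {t : ℝ}
    (hf : HasDerivAt f f' t) : HasDerivAt (fun s ↦ toLp 2 (f s)) (toLp 2 f') t :=
  (PiLp.hasFDerivAt_toLp 2 (f t)).comp_hasDerivAt t hf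

theorem EuclideanSpace.real_inner_toLp_toLp {ι : Type*} [Fintype ι] (x y : ι → ℝ) :
    ⟪WithLp.toLp 2 x, WithLp.toLp 2 y⟫ = ∑ i, x i * y i := by
  simp [EuclideanSpace.inner_toLp_toLp, dotProduct, mul_comm]

open WithLp in
theorem stmt8_general {k : ℕ} (Y α : ℝ) (hα0 : 0 ≤ α)
    (hα : α < 2 * Real.sqrt Y)
    (P U Q V : ℝ → (Fin k → ℝ))
    (hP : ∀ t, HasDerivAt P ((Y - ∑ i, P t i * Q t i) • Q t + U t) t)
    (hQ : ∀ t, HasDerivAt Q ((Y - ∑ i, P t i * Q t i) • P t + V t) t)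
    (hUV : ∀ t, Real.sqrt (∑ i, (U t i) ^ 2) + Real.sqrt (∑ i, (V t i) ^ 2)
              ≤ (1 / Real.sqrt 2) * α * (Y - α ^ 2 / 4))
    (h0 : α ^ 2 ≤ ∑ i, (P 0 i + Q 0 i) ^ 2) :
    ∀ t ≥ (0 : ℝ), α ^ 2 ≤ ∑ i, (P t i + Q t i) ^ 2 := by
  intro t ht
  rcases hα0.eq_or_lt with rfl | hα_pos
  · simpa using Finset.sum_nonneg fun i _ ↦ sq_nonneg (P t i + Q t i)
  have hnorm_sq (x : Fin k → ℝ) : ‖toLp 2 x‖ ^ 2 = ∑ i, x i ^ 2 :=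
    EuclideanSpace.real_norm_sq_eq _
  have hgap : 0 < Y - α ^ 2 / 4 := by
    have := (Real.lt_sqrt (by positivity)).1 (by linarith : α / 2 < √Y)
    linarith
  have hUV' (s : ℝ) : ‖toLp 2 (U s) + toLp 2 (V s)‖ < α * (Y - α ^ 2 / 4) :=
    calc ‖toLp 2 (U s) + toLp 2 (V s)‖
        ≤ ‖toLp 2 (U s)‖ + ‖toLp 2 (V s)‖ := norm_add_le _ _
      _ = √(∑ i, U s i ^ 2) + √(∑ i, V s i ^ 2) := by simp [EuclideanSpace.norm_eq]
      _ ≤ 1 / √2 * α * (Y - α ^ 2 / 4) := hUV s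
      _ < α * (Y - α ^ 2 / 4) := by
        have : 1 / √2 < 1 := by rw [div_lt_one (by positivity)]; exact Real.one_lt_sqrt_two
        nlinarith [mul_pos hα_pos hgap]
  have hflow := sq_le_norm_add_sq_of_gradientFlow (P := fun s ↦ toLp 2 (P s))
    (Q := fun s ↦ toLp 2 (Q s)) hα_pos (fun s ↦ ?_) (fun s ↦ ?_) hUV' (by simpa [← toLp_add, hnorm_sq] using h0) ht
  · simpa [← toLp_add, hnorm_sq] using hflow
  · simpa [EuclideanSpace.real_inner_toLp_toLp] using (hP s).toLp
  · simpa [EuclideanSpace.real_inner_toLp_toLp] using (hQ s).toLp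

theorem stmt8 {k : ℕ} (Y α : ℝ) (hY : 0 < Y) (hα0 : 0 ≤ α)
    (hα : α < 2 * Real.sqrt Y)
    (P U Q V : ℝ → (Fin k → ℝ))
    (hP : ∀ t, HasDerivAt P ((Y - ∑ i, P t i * Q t i) • Q t + U t) t)
    (hQ : ∀ t, HasDerivAt Q ((Y - ∑ i, P t i * Q t i) • P t + V t) t)
    (hUV : ∀ t, Real.sqrt (∑ i, (U t i) ^ 2) + Real.sqrt (∑ i, (V t i) ^ 2)
              ≤ (1 / Real.sqrt 2) * α * (Y - α ^ 2 / 4))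
    (h0 : α ^ 2 ≤ ∑ i, (P 0 i + Q 0 i) ^ 2) :
    ∀ t ≥ (0 : ℝ), α ^ 2 ≤ ∑ i, (P t i + Q t i) ^ 2 :=
  stmt8_general Y α hα0 hα P U Q V hP hQ hUV h0
end

section
/- Let A ∈ ℝ^{p×o} and B ∈ ℝ^{q×o} with q ≥ o. Then ABᵀ = 0 if and only if there exist orthogonal matrices Ψ_A ∈ O(p), Ψ_B ∈ O(q), Φ ∈ O(o), and rectangular diagonal matrices Σ_A ∈ ℝ^{p×o}, Σ_B ∈ ℝ^{q×o} with nonnegative diagonal entries, such that A = Ψ_A Σ_A Φᵀ and B = Ψ_B Σ_B Φᵀ are singular value decompositions of A and B, and Σ_A Σ_Bᵀ = 0. -/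
open Matrix

/-- A real square matrix is orthogonal. -/
def IsOrth {n : ℕ} (M : Matrix (Fin n) (Fin n) ℝ) : Prop := Mᵀ * M = 1

/-- A rectangular diagonal matrix with nonnegative diagonal entries. -/
def IsRectDiag {p o : ℕ} (S : Matrix (Fin p) (Fin o) ℝ) : Prop :=
  (∀ (i : Fin p) (j : Fin o), (i : ℕ) ≠ (j : ℕ) → S i j = 0) ∧ ∀ i j, 0 ≤ S i j

/-!
Since `A Bᵀ = 0`, the Gram matrices `AᵀA` and `BᵀB` annihilate each other, so an eigenvector `u`
of the symmetric matrix `AᵀA - BᵀB` with eigenvalue `d` is an eigenvector of `AᵀA` with eigenvalue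
`max d 0` and of `BᵀB` with eigenvalue `max (-d) 0`. An orthonormal eigenbasis `Φ` of `AᵀA - BᵀB`
therefore diagonalises both Gram matrices, with disjointly supported diagonals `σ²` and `τ²`. The
columns of `AΦ` are then orthogonal of lengths `σ`; normalising the nonzero ones and completing them
to an orthonormal basis gives `Ψ_A` with `AΦ = Ψ_A Σ_A`, and likewise for `B`. Ordering the
eigenvalues decreasingly puts the nonzero `σ k` first, and there are at most `rank A ≤ p` of them,
so they fit on the diagonal of a `p × o` matrix.
-/

def rectDiag (p : ℕ) {o : ℕ} (σ : Fin o → ℝ) : Matrix (Fin p) (Fin o) ℝ :=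
  of fun i j => if (i : ℕ) = j then σ j else 0

theorem isRectDiag_rectDiag {p o : ℕ} {σ : Fin o → ℝ} (hσ : ∀ k, 0 ≤ σ k) :
    IsRectDiag (rectDiag p σ) :=
  ⟨fun _ _ hij => if_neg hij, fun i j => by simp only [rectDiag, of_apply]; split_ifs <;> simp [hσ]⟩

theorem mul_rectDiag_apply {m p o : ℕ} (M : Matrix (Fin m) (Fin p) ℝ) (σ : Fin o → ℝ)
    (x : Fin m) (k : Fin o) :
    (M * rectDiag p σ) x k = if h : (k : ℕ) < p then M x ⟨k, h⟩ * σ k else 0 := by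
  rw [mul_apply]
  split_ifs with h
  · rw [Finset.sum_eq_single ⟨k, h⟩ (fun i _ hi => by simp [rectDiag, Fin.val_ne_of_ne hi])
      (by simp)]
    simp [rectDiag]
  · refine Finset.sum_eq_zero fun i _ => ?_
    simp only [rectDiag, of_apply, mul_ite, mul_zero]
    exact if_neg fun hik => h (by rw [← hik]; exact i.2)

theorem rectDiag_mul_transpose_rectDiag_eq_zero {p q o : ℕ} {σ τ : Fin o → ℝ}
    (h : ∀ k, σ k * τ k = 0) : rectDiag p σ * (rectDiag q τ)ᵀ = 0 := by
  ext i j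
  rw [mul_apply]
  refine Finset.sum_eq_zero fun k _ => ?_
  by_cases hi : (i : ℕ) = k <;> by_cases hj : (j : ℕ) = k <;> simp [rectDiag, hi, hj, h]

theorem isOrth_of_orthonormalBasis {n : ℕ}
    (b : OrthonormalBasis (Fin n) ℝ (EuclideanSpace ℝ (Fin n))) : IsOrth (of fun i j => b j i) := by
  have h := (EuclideanSpace.basisFun (Fin n) ℝ).toMatrix_orthonormalBasis_conjTranspose_mul_self b
  have e : (EuclideanSpace.basisFun (Fin n) ℝ).toBasis.toMatrix b = of fun i j => b j i := by
    ext i j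
    simp [Module.Basis.toMatrix_apply]
  rwa [e, conjTranspose_eq_transpose_of_trivial] at h

theorem IsOrth.eq_mul_transpose {m n : ℕ} {Φ : Matrix (Fin n) (Fin n) ℝ} (hΦ : IsOrth Φ)
    {A M : Matrix (Fin m) (Fin n) ℝ} (h : A * Φ = M) : A = M * Φᵀ := by
  rw [← h, Matrix.mul_assoc, mul_eq_one_comm.mp hΦ, Matrix.mul_one]

theorem card_ne_zero_le_of_transpose_mul_self_eq_diagonal {p o : ℕ}
    {C : Matrix (Fin p) (Fin o) ℝ} {μ : Fin o → ℝ} (hC : Cᵀ * C = diagonal μ) :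
    Fintype.card {k // μ k ≠ 0} ≤ p := by
  classical
  rw [← rank_diagonal, ← hC, rank_transpose_mul_self]
  exact C.rank_le_height

theorem val_lt_of_antitone_of_transpose_mul_self_eq_diagonal {p o : ℕ}
    {C : Matrix (Fin p) (Fin o) ℝ} {σ : Fin o → ℝ} (hC : Cᵀ * C = diagonal fun k => σ k ^ 2)
    (hσ : Antitone σ) (h0 : ∀ k, 0 ≤ σ k) {k : Fin o} (hk : σ k ≠ 0) : (k : ℕ) < p := by
  classical
  have hcard := card_ne_zero_le_of_transpose_mul_self_eq_diagonal hC
  simp only [ne_eq, pow_eq_zero_iff two_ne_zero] at hcard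
  have hsub : Finset.Iic k ⊆ Finset.univ.filter fun i => σ i ≠ 0 := fun i hi => by
    simp only [Finset.mem_filter, Finset.mem_univ, true_and]
    exact ((h0 k).lt_of_ne' hk |>.trans_le (hσ (Finset.mem_Iic.1 hi))).ne'
  have := (Finset.card_le_card hsub).trans_eq (Fintype.card_subtype _).symm
  rw [Fin.card_Iic] at this
  simp only [ne_eq] at this
  omega

theorem exists_isOrth_mul_rectDiag {p o : ℕ} {C : Matrix (Fin p) (Fin o) ℝ} {σ : Fin o → ℝ}
    (hC : Cᵀ * C = diagonal fun k => σ k ^ 2) (hσ : ∀ k, σ k ≠ 0 → (k : ℕ) < p) :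
    ∃ Ψ, IsOrth Ψ ∧ C = Ψ * rectDiag p σ := by
  have hcol (j k : Fin o) : Cᵀ j ⬝ᵥ Cᵀ k = if j = k then σ j ^ 2 else 0 := by
    have := congrFun₂ hC j k
    simp only [mul_apply', diagonal_apply] at this
    exact this
  let v : Fin p → EuclideanSpace ℝ (Fin p) := fun i =>
    if h : (i : ℕ) < o then (σ ⟨i, h⟩)⁻¹ • WithLp.toLp 2 (Cᵀ ⟨i, h⟩) else 0
  let s : Set (Fin p) := {i | ∃ h : (i : ℕ) < o, σ ⟨i, h⟩ ≠ 0}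
  have hv : Orthonormal ℝ (s.domRestrict v) := by
    rw [orthonormal_iff_ite]
    rintro ⟨i, hio, hi⟩ ⟨j, hjo, hj⟩
    simp only [Set.domRestrict_apply, v, dif_pos hio, dif_pos hjo, real_inner_smul_left,
      real_inner_smul_right, EuclideanSpace.inner_toLp_toLp]
    rw [star_trivial, dotProduct_comm, hcol]
    by_cases hij : i = j
    · subst hij
      simp only [if_true]
      field_simp
    · have hij' : (⟨i, hio⟩ : Fin o) ≠ ⟨j, hjo⟩ := by simpa [Fin.ext_iff] using hij
      simp [hij, hij']
  obtain ⟨b, hb⟩ := hv.exists_orthonormalBasis_extension_of_card_eq (by simp)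
  refine ⟨of fun i j => b j i, isOrth_of_orthonormalBasis b, ?_⟩
  refine Matrix.ext fun x k => (mul_rectDiag_apply _ σ x k).symm ▸ ?_
  by_cases hk : σ k = 0
  · have hk0 : Cᵀ k ⬝ᵥ Cᵀ k = 0 := by rw [hcol, if_pos rfl, hk]; ring
    have : C x k = 0 := congrFun (dotProduct_self_eq_zero.1 hk0) x
    simp [this, hk]
  · have hkp := hσ k hk
    rw [dif_pos hkp]
    simp only [of_apply, hb ⟨k, hkp⟩ ⟨k.2, hk⟩, v, dif_pos k.2, Fin.eta, PiLp.smul_apply,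
      transpose_apply, smul_eq_mul]
    field_simp

section OrderedRing

variable {R : Type*} [CommRing R]

theorem dotProduct_transpose_mul_self_mulVec {m n : Type*} [Fintype m] [Fintype n]
    (M : Matrix m n R) (u v : n → R) : u ⬝ᵥ (Mᵀ * M) *ᵥ v = (M *ᵥ u) ⬝ᵥ (M *ᵥ v) := by
  rw [← mulVec_mulVec, dotProduct_mulVec, vecMul_transpose]

variable [LinearOrder R] [IsStrictOrderedRing R]

theorem dotProduct_self_nonneg {n : Type*} [Fintype n] (v : n → R) : 0 ≤ v ⬝ᵥ v :=
  Fintype.sum_nonneg fun i => mul_self_nonneg (v i)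

theorem eq_max_smul_of_sub_eq_smul {n : Type*} [Fintype n] {x y u : n → R} {d : R}
    (hxy : x ⬝ᵥ y = 0) (hx : 0 ≤ u ⬝ᵥ x) (hy : 0 ≤ u ⬝ᵥ y) (h : x - y = d • u) :
    x = max d 0 • u ∧ y = max (-d) 0 • u := by
  have hxx : x ⬝ᵥ x = d * (u ⬝ᵥ x) := calc
    x ⬝ᵥ x = x ⬝ᵥ (x - y) := by rw [dotProduct_sub, hxy, sub_zero]
    _ = d * (u ⬝ᵥ x) := by rw [h, dotProduct_smul, smul_eq_mul, dotProduct_comm]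
  have hyy : y ⬝ᵥ y = -d * (u ⬝ᵥ y) := calc
    y ⬝ᵥ y = -(y ⬝ᵥ (x - y)) := by rw [dotProduct_sub, dotProduct_comm y x, hxy]; ring
    _ = -d * (u ⬝ᵥ y) := by rw [h, dotProduct_smul, smul_eq_mul, dotProduct_comm]; ring
  rcases le_total 0 d with hd | hd
  · have hy0 : y = 0 := dotProduct_self_eq_zero.1 <|
      le_antisymm (hyy ▸ mul_nonpos_of_nonpos_of_nonneg (neg_nonpos.2 hd) hy)
        (dotProduct_self_nonneg y)
    rw [max_eq_left hd, max_eq_right (neg_nonpos.2 hd), ← h, hy0]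
    simp
  · have hx0 : x = 0 := dotProduct_self_eq_zero.1 <|
      le_antisymm (hxx ▸ mul_nonpos_of_nonpos_of_nonneg hd hx) (dotProduct_self_nonneg x)
    rw [max_eq_right hd, max_eq_left (neg_nonneg.2 hd), neg_smul, ← h, hx0]
    simp

theorem mulVec_eq_max_smul_of_mul_transpose_eq_zero {m n l : Type*} [Fintype m] [Fintype n]
    [Fintype l] {A : Matrix m n R} {B : Matrix l n R} (h0 : A * Bᵀ = 0) {u : n → R} {d : R}
    (hu : (Aᵀ * A - Bᵀ * B) *ᵥ u = d • u) :
    (Aᵀ * A) *ᵥ u = max d 0 • u ∧ (Bᵀ * B) *ᵥ u = max (-d) 0 • u := by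
  refine eq_max_smul_of_sub_eq_smul ?_ ?_ ?_ (by rw [← sub_mulVec, hu])
  · rw [← mulVec_mulVec, ← mulVec_mulVec, mulVec_transpose, ← dotProduct_mulVec, mulVec_mulVec,
      h0, zero_mulVec, dotProduct_zero]
  · rw [dotProduct_transpose_mul_self_mulVec]
    exact dotProduct_self_nonneg _
  · rw [dotProduct_transpose_mul_self_mulVec]
    exact dotProduct_self_nonneg _

end OrderedRing

theorem mul_eq_mul_diagonal_of_mulVec_eq_smul {n : ℕ} {M Φ : Matrix (Fin n) (Fin n) ℝ}
    {μ : Fin n → ℝ} (h : ∀ j, M *ᵥ Φᵀ j = μ j • Φᵀ j) : M * Φ = Φ * diagonal μ := by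
  ext i j
  rw [mul_diagonal, mul_apply']
  exact (congrFun (h j) i).trans (mul_comm _ _)

theorem transpose_mul_self_eq_diagonal_of_isOrth {m n : ℕ} {A : Matrix (Fin m) (Fin n) ℝ}
    {Φ : Matrix (Fin n) (Fin n) ℝ} {μ : Fin n → ℝ} (hΦ : IsOrth Φ)
    (h : Aᵀ * A * Φ = Φ * diagonal μ) : (A * Φ)ᵀ * (A * Φ) = diagonal μ := by
  rw [transpose_mul, Matrix.mul_assoc, ← Matrix.mul_assoc Aᵀ, h, ← Matrix.mul_assoc, hΦ,
    Matrix.one_mul]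

theorem exists_isOrth_transpose_mul_self_eq_diagonal {p q o : ℕ} {A : Matrix (Fin p) (Fin o) ℝ}
    {B : Matrix (Fin q) (Fin o) ℝ} (h0 : A * Bᵀ = 0) :
    ∃ (Φ : Matrix (Fin o) (Fin o) ℝ) (σ τ : Fin o → ℝ), IsOrth Φ ∧ Antitone σ ∧
      (∀ k, 0 ≤ σ k) ∧ (∀ k, 0 ≤ τ k) ∧ (∀ k, σ k * τ k = 0) ∧
      (A * Φ)ᵀ * (A * Φ) = diagonal (fun k => σ k ^ 2) ∧
      (B * Φ)ᵀ * (B * Φ) = diagonal (fun k => τ k ^ 2) := by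
  have hS : (Aᵀ * A - Bᵀ * B).IsHermitian := by
    simpa only [conjTranspose_eq_transpose_of_trivial] using
      (isHermitian_conjTranspose_mul_self A).sub (isHermitian_conjTranspose_mul_self B)
  have hT := isSymmetric_toEuclideanLin_iff.mpr hS
  let v := hT.eigenvectorBasis finrank_euclideanSpace_fin
  let d := hT.eigenvalues finrank_euclideanSpace_fin
  have hv (j : Fin o) : (Aᵀ * A - Bᵀ * B) *ᵥ v j = d j • v j := by
    have := congrArg WithLp.ofLp (hT.apply_eigenvectorBasis finrank_euclideanSpace_fin j)
    rwa [toLpLin_apply] at this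
  have hsplit (j : Fin o) := mulVec_eq_max_smul_of_mul_transpose_eq_zero h0 (hv j)
  have hΦ := isOrth_of_orthonormalBasis v
  refine ⟨_, fun k => √(max (d k) 0), fun k => √(max (-d k) 0), hΦ,
    fun i j hij => Real.sqrt_le_sqrt (max_le_max_right 0 (hT.eigenvalues_antitone _ hij)),
    fun _ => Real.sqrt_nonneg _, fun _ => Real.sqrt_nonneg _, fun k => ?_, ?_, ?_⟩
  · rcases le_total (d k) 0 with hk | hk
    · simp [max_eq_right hk]
    · simp [max_eq_right (neg_nonpos.2 hk)]
  · simp_rw [Real.sq_sqrt (le_max_right _ 0)]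
    exact transpose_mul_self_eq_diagonal_of_isOrth hΦ
      (mul_eq_mul_diagonal_of_mulVec_eq_smul fun j => (hsplit j).1)
  · simp_rw [Real.sq_sqrt (le_max_right _ 0)]
    exact transpose_mul_self_eq_diagonal_of_isOrth hΦ
      (mul_eq_mul_diagonal_of_mulVec_eq_smul fun j => (hsplit j).2)

theorem stmt13 {p o q : ℕ} (hq : o ≤ q)
    (A : Matrix (Fin p) (Fin o) ℝ) (B : Matrix (Fin q) (Fin o) ℝ) :
    A * Bᵀ = 0 ↔
      ∃ (PsiA : Matrix (Fin p) (Fin p) ℝ) (PsiB : Matrix (Fin q) (Fin q) ℝ)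
        (Phi : Matrix (Fin o) (Fin o) ℝ)
        (SA : Matrix (Fin p) (Fin o) ℝ) (SB : Matrix (Fin q) (Fin o) ℝ),
        IsOrth PsiA ∧ IsOrth PsiB ∧ IsOrth Phi ∧ IsRectDiag SA ∧ IsRectDiag SB ∧
        A = PsiA * SA * Phiᵀ ∧ B = PsiB * SB * Phiᵀ ∧ SA * SBᵀ = 0 := by
  constructor
  · intro h0
    obtain ⟨Φ, σ, τ, hΦ, hσ_anti, hσ, hτ, hστ, hAΦ, hBΦ⟩ :=
      exists_isOrth_transpose_mul_self_eq_diagonal h0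
    obtain ⟨ΨA, hΨA, hA⟩ := exists_isOrth_mul_rectDiag hAΦ fun _ hk =>
      val_lt_of_antitone_of_transpose_mul_self_eq_diagonal hAΦ hσ_anti hσ hk
    obtain ⟨ΨB, hΨB, hB⟩ := exists_isOrth_mul_rectDiag hBΦ fun k _ => k.2.trans_le hq
    refine ⟨ΨA, ΨB, Φ, rectDiag p σ, rectDiag q τ, hΨA, hΨB, hΦ, isRectDiag_rectDiag hσ,
      isRectDiag_rectDiag hτ, hΦ.eq_mul_transpose hA, hΦ.eq_mul_transpose hB,
      rectDiag_mul_transpose_rectDiag_eq_zero hστ⟩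
  · rintro ⟨ΨA, ΨB, Φ, SA, SB, -, -, hΦ, -, -, rfl, rfl, hS⟩
    calc ΨA * SA * Φᵀ * (ΨB * SB * Φᵀ)ᵀ = ΨA * (SA * (Φᵀ * Φ) * SBᵀ) * ΨBᵀ := by
          simp only [transpose_mul, transpose_transpose, Matrix.mul_assoc]
      _ = 0 := by rw [hΦ, Matrix.mul_one, hS, Matrix.mul_zero, Matrix.zero_mul]
end

section
/- Let P ∈ ℝ^{n×k}, Q ∈ ℝ^{m×k} with Ȳ = PQᵀ (target set). Then the Hessian of the loss, given by the block matrix H = −[[QᵀQ ⊗ I_n, Qᵀ ⊗ P·K_{mk}],[Pᵀ ⊗ Q·K_{nk}, PᵀP ⊗ I_m]], is negative semidefinite, its nonzero eigenvalues are −(σ_i(Q)² + σ_j(P)²) and −σ_i(Q)² for the nonzero singular values σ_i(Q), σ_j(P), and its kernel has dimension (m+n)k − mn when rank(PQᵀ) = m (i.e., exactly mn negative eigenvalues counted with multiplicity). -/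
/-!
At a point of the target set the Hessian is the Gauss–Newton matrix `H = -JᵀJ`, where `J` is
the Jacobian of `(vec P, vec Q) ↦ vec (P Qᵀ)`. So `-H` is positive semidefinite, and the nonzero
eigenvalues of `JᵀJ` are those of `JJᵀ = QQᵀ ⊗ I + I ⊗ PPᵀ`. Diagonalizing `QQᵀ = U D U*` and
`PPᵀ = V E V*`, this Kronecker sum is conjugate by the unitary `U ⊗ V` to the diagonal matrix
`D ⊗ I + I ⊗ E`, so its eigenvalues are the sums `σᵢ(Q)² + σⱼ(P)²`. Finally
`rank H = rank JJᵀ`, and when `Q` has full row rank `QQᵀ ⊗ I` is positive definite, hence so is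
`JJᵀ`, which then has full rank `mn`.
-/

open Matrix Kronecker

/-- The commutation (vec-permutation) matrix `K_{pq}` satisfying
`vec(Mᵀ) = K_{pq} · vec(M)` for `M ∈ ℝ^{p×q}`, where `vec(M)` is indexed by
pairs (column, row). -/
def Kcomm (p q : ℕ) : Matrix (Fin p × Fin q) (Fin q × Fin p) ℝ :=
  fun a b => if a.1 = b.2 ∧ a.2 = b.1 then 1 else 0

/-- The Hessian of the loss at a point of the target set:
`H = −[[QᵀQ ⊗ I_n, Qᵀ ⊗ P·K_{mk}],[Pᵀ ⊗ Q·K_{nk}, PᵀP ⊗ I_m]]`. -/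
noncomputable def hessH {n m k : ℕ}
    (P : Matrix (Fin n) (Fin k) ℝ) (Q : Matrix (Fin m) (Fin k) ℝ) :
    Matrix ((Fin k × Fin n) ⊕ (Fin k × Fin m)) ((Fin k × Fin n) ⊕ (Fin k × Fin m)) ℝ :=
  -(Matrix.fromBlocks
      ((Qᵀ * Q) ⊗ₖ (1 : Matrix (Fin n) (Fin n) ℝ)) ((Qᵀ ⊗ₖ P) * Kcomm m k)
      ((Pᵀ ⊗ₖ Q) * Kcomm n k) ((Pᵀ * P) ⊗ₖ (1 : Matrix (Fin m) (Fin m) ℝ)))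

theorem Kcomm_transpose (p q : ℕ) : (Kcomm p q)ᵀ = Kcomm q p := by
  ext a b
  simp [Kcomm, and_comm, eq_comm]

theorem Kcomm_mul_Kcomm (p q : ℕ) : Kcomm q p * Kcomm p q = 1 := by
  ext ⟨a, b⟩ ⟨c, d⟩
  simp [Kcomm, mul_apply, Fintype.sum_prod_type, one_apply, ite_and]

theorem Kcomm_transpose_mul_kronecker {p q r s : ℕ} (A : Matrix (Fin p) (Fin r) ℝ)
    (B : Matrix (Fin q) (Fin s) ℝ) :
    (Kcomm p q)ᵀ * (A ⊗ₖ B) = (B ⊗ₖ A) * Kcomm s r := by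
  ext ⟨a, b⟩ ⟨c, d⟩
  simp [Kcomm, mul_apply, Fintype.sum_prod_type, ite_and, mul_comm]

namespace Matrix

variable {ι κ : Type*} [Fintype κ]

theorem rank_neg {R : Type*} [CommRing R] (A : Matrix ι κ R) : (-A).rank = A.rank := by
  have hneg : (-A).mulVecLin = -A.mulVecLin := by
    ext v : 1
    simp
  rw [rank, rank, hneg, LinearMap.range_neg]

variable [Fintype ι]

theorem isUnit_of_rank_eq_card {K : Type*} [Field K] [DecidableEq ι] {A : Matrix ι ι K}
    (h : A.rank = Fintype.card ι) : IsUnit A := by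
  rw [← mulVec_surjective_iff_isUnit]
  have hrange : LinearMap.range A.mulVecLin = ⊤ := by
    refine Submodule.eq_top_of_finrank_eq ?_
    rw [Module.finrank_fintype_fun_eq_card, ← h]
    rfl
  exact LinearMap.range_eq_top.mp hrange

theorem exists_mul_transpose_mulVec_eq_smul {K : Type*} [Field K] {A : Matrix ι κ K} {μ : K}
    (hμ : μ ≠ 0) {x : κ → K} (hx : x ≠ 0) (h : (Aᵀ * A) *ᵥ x = μ • x) :
    ∃ y ≠ 0, (A * Aᵀ) *ᵥ y = μ • y := by
  refine ⟨A *ᵥ x, fun h0 => hx ?_, ?_⟩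
  · rw [← mulVec_mulVec, h0, mulVec_zero] at h
    exact (smul_eq_zero.mp h.symm).resolve_left hμ
  · rw [mulVec_mulVec, Matrix.mul_assoc, ← mulVec_mulVec, h, mulVec_smul]

theorem mem_spectrum_of_mulVec_eq_smul {K : Type*} [Field K] [DecidableEq ι] {A : Matrix ι ι K}
    {μ : K} {v : ι → K} (hv : v ≠ 0) (h : A *ᵥ v = μ • v) : μ ∈ spectrum K A := by
  rw [← spectrum_toLin']
  exact Module.End.HasEigenvalue.mem_spectrum
    (Module.End.hasEigenvalue_of_hasEigenvector ⟨Module.End.mem_eigenspace_iff.mpr h, hv⟩)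

theorem posSemidef_mul_transpose_self (A : Matrix ι κ ℝ) : (A * Aᵀ).PosSemidef := by
  simpa using posSemidef_self_mul_conjTranspose A

theorem posDef_mul_transpose_self_of_rank_eq [DecidableEq ι] {A : Matrix ι κ ℝ}
    (h : A.rank = Fintype.card ι) : (A * Aᵀ).PosDef :=
  (posSemidef_mul_transpose_self A).posDef_iff_isUnit.mpr
    (isUnit_of_rank_eq_card (by rw [rank_self_mul_transpose, h]))

theorem conjStarAlgAut_kronecker {R : Type*} [CommRing R] [StarRing R] [DecidableEq ι]
    [DecidableEq κ] (U : unitary (Matrix ι ι R)) (V : unitary (Matrix κ κ R))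
    (X : Matrix ι ι R) (Y : Matrix κ κ R) :
    Unitary.conjStarAlgAut R (Matrix (ι × κ) (ι × κ) R)
        ⟨(U : Matrix ι ι R) ⊗ₖ (V : Matrix κ κ R), kronecker_mem_unitary U.2 V.2⟩ (X ⊗ₖ Y) =
      Unitary.conjStarAlgAut R (Matrix ι ι R) U X ⊗ₖ
        Unitary.conjStarAlgAut R (Matrix κ κ R) V Y := by
  simp only [Unitary.conjStarAlgAut_apply, star_eq_conjTranspose, conjTranspose_kronecker,
    mul_kronecker_mul]

end Matrix

namespace Matrix.IsHermitian

variable {𝕜 ι κ : Type*} [RCLike 𝕜] [Fintype ι] [DecidableEq ι] [Fintype κ] [DecidableEq κ]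
  {A : Matrix ι ι 𝕜} {B : Matrix κ κ 𝕜}

theorem exists_mulVec_eq_eigenvalues_smul (hA : A.IsHermitian) (i : ι) :
    ∃ v ≠ 0, A *ᵥ v = hA.eigenvalues i • v := by
  refine ⟨hA.eigenvectorBasis i, fun h => hA.eigenvectorBasis.orthonormal.ne_zero i ?_,
    hA.mulVec_eigenvectorBasis i⟩
  simpa using congrArg (WithLp.toLp 2) h

theorem kronecker_one_add_one_kronecker_eq (hA : A.IsHermitian) (hB : B.IsHermitian) :
    A ⊗ₖ 1 + 1 ⊗ₖ B = Unitary.conjStarAlgAut 𝕜 (Matrix (ι × κ) (ι × κ) 𝕜)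
      ⟨(hA.eigenvectorUnitary : Matrix ι ι 𝕜) ⊗ₖ (hB.eigenvectorUnitary : Matrix κ κ 𝕜),
        kronecker_mem_unitary hA.eigenvectorUnitary.2 hB.eigenvectorUnitary.2⟩
      (diagonal fun p => ((hA.eigenvalues p.1 + hB.eigenvalues p.2 : ℝ) : 𝕜)) := by
  have hdiag : (diagonal fun p : ι × κ => ((hA.eigenvalues p.1 + hB.eigenvalues p.2 : ℝ) : 𝕜)) =
      diagonal (RCLike.ofReal ∘ hA.eigenvalues) ⊗ₖ 1 +
        1 ⊗ₖ diagonal (RCLike.ofReal ∘ hB.eigenvalues) := by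
    ext ⟨i, j⟩ ⟨i', j'⟩
    by_cases hi : i = i' <;> by_cases hj : j = j' <;> simp [hi, hj]
  rw [hdiag, map_add, conjStarAlgAut_kronecker, conjStarAlgAut_kronecker,
    ← hA.spectral_theorem, ← hB.spectral_theorem, map_one, map_one]

theorem spectrum_real_kronecker_one_add_one_kronecker (hA : A.IsHermitian)
    (hB : B.IsHermitian) :
    spectrum ℝ (A ⊗ₖ 1 + 1 ⊗ₖ B) =
      Set.image2 (· + ·) (Set.range hA.eigenvalues) (Set.range hB.eigenvalues) := by
  ext x
  rw [kronecker_one_add_one_kronecker_eq hA hB, ← spectrum.algebraMap_mem_iff 𝕜,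
    AlgEquiv.spectrum_eq, spectrum_diagonal]
  simp only [Set.mem_range, RCLike.algebraMap_eq_ofReal, RCLike.ofReal_inj, Prod.exists,
    Set.mem_image2, exists_exists_eq_and]

end Matrix.IsHermitian

section Hessian

variable {n m k : ℕ}

/-- `vec (dP Qᵀ + P dQᵀ) = (Q ⊗ I_n) vec dP + (I_m ⊗ P) K_{mk} vec dQ`. -/
noncomputable def jacobianMulTranspose (P : Matrix (Fin n) (Fin k) ℝ)
    (Q : Matrix (Fin m) (Fin k) ℝ) :
    Matrix (Fin m × Fin n) ((Fin k × Fin n) ⊕ (Fin k × Fin m)) ℝ :=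
  fromCols (Q ⊗ₖ (1 : Matrix (Fin n) (Fin n) ℝ)) (((1 : Matrix (Fin m) (Fin m) ℝ) ⊗ₖ P) * Kcomm m k)

theorem hessH_eq_neg_transpose_mul_self (P : Matrix (Fin n) (Fin k) ℝ)
    (Q : Matrix (Fin m) (Fin k) ℝ) :
    hessH P Q = -((jacobianMulTranspose P Q)ᵀ * jacobianMulTranspose P Q) := by
  rw [hessH, jacobianMulTranspose, transpose_fromCols, fromRows_mul_fromCols, transpose_mul,
    ← kroneckerMap_transpose, ← kroneckerMap_transpose, transpose_one, transpose_one]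
  congr 2
  · rw [← mul_kronecker_mul, Matrix.mul_one]
  · rw [← Matrix.mul_assoc, ← mul_kronecker_mul, Matrix.mul_one, Matrix.one_mul]
  · rw [Matrix.mul_assoc, ← mul_kronecker_mul, Matrix.one_mul, Matrix.mul_one,
      Kcomm_transpose_mul_kronecker]
  · rw [Matrix.mul_assoc, ← Matrix.mul_assoc _ _ (Kcomm m k), ← mul_kronecker_mul,
      Matrix.one_mul, ← Matrix.mul_assoc, Kcomm_transpose_mul_kronecker, Matrix.mul_assoc,
      Kcomm_mul_Kcomm, Matrix.mul_one]

theorem jacobianMulTranspose_mul_transpose (P : Matrix (Fin n) (Fin k) ℝ)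
    (Q : Matrix (Fin m) (Fin k) ℝ) :
    jacobianMulTranspose P Q * (jacobianMulTranspose P Q)ᵀ =
      (Q * Qᵀ) ⊗ₖ (1 : Matrix (Fin n) (Fin n) ℝ) + (1 : Matrix (Fin m) (Fin m) ℝ) ⊗ₖ (P * Pᵀ) := by
  rw [jacobianMulTranspose, transpose_fromCols, fromCols_mul_fromRows, transpose_mul,
    ← kroneckerMap_transpose, ← kroneckerMap_transpose, transpose_one, transpose_one,
    ← mul_kronecker_mul, Matrix.mul_one, Matrix.mul_assoc, ← Matrix.mul_assoc (Kcomm m k),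
    Kcomm_transpose, Kcomm_mul_Kcomm, Matrix.one_mul, ← mul_kronecker_mul, Matrix.mul_one]

theorem posSemidef_neg_hessH (P : Matrix (Fin n) (Fin k) ℝ) (Q : Matrix (Fin m) (Fin k) ℝ) :
    (-(hessH P Q)).PosSemidef := by
  simpa [hessH_eq_neg_transpose_mul_self] using
    posSemidef_conjTranspose_mul_self (jacobianMulTranspose P Q)

theorem exists_eq_neg_add_of_hessH_mulVec_eq_smul {P : Matrix (Fin n) (Fin k) ℝ}
    {Q : Matrix (Fin m) (Fin k) ℝ} {μ : ℝ} (hμ : μ ≠ 0)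
    {x : (Fin k × Fin n) ⊕ (Fin k × Fin m) → ℝ} (hx0 : x ≠ 0) (hx : hessH P Q *ᵥ x = μ • x) :
    ∃ a c : ℝ, (∃ u ≠ 0, (Q * Qᵀ) *ᵥ u = a • u) ∧ (∃ w ≠ 0, (P * Pᵀ) *ᵥ w = c • w) ∧
      μ = -(a + c) := by
  have hQQ := (posSemidef_mul_transpose_self Q).isHermitian
  have hPP := (posSemidef_mul_transpose_self P).isHermitian
  rw [hessH_eq_neg_transpose_mul_self, neg_mulVec, neg_eq_iff_eq_neg, ← neg_smul] at hx
  obtain ⟨y, hy0, hy⟩ := exists_mul_transpose_mulVec_eq_smul (neg_ne_zero.mpr hμ) hx0 hx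
  rw [jacobianMulTranspose_mul_transpose] at hy
  have hmem := mem_spectrum_of_mulVec_eq_smul hy0 hy
  rw [hQQ.spectrum_real_kronecker_one_add_one_kronecker hPP] at hmem
  obtain ⟨_, ⟨l, rfl⟩, _, ⟨i, rfl⟩, hsum⟩ := hmem
  exact ⟨_, _, hQQ.exists_mulVec_eq_eigenvalues_smul l, hPP.exists_mulVec_eq_eigenvalues_smul i,
    by linarith⟩

theorem rank_hessH_of_rank_eq (P : Matrix (Fin n) (Fin k) ℝ) {Q : Matrix (Fin m) (Fin k) ℝ}
    (hQ : Q.rank = m) : (hessH P Q).rank = m * n := by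
  have hpos : ((Q * Qᵀ) ⊗ₖ (1 : Matrix (Fin n) (Fin n) ℝ) +
      (1 : Matrix (Fin m) (Fin m) ℝ) ⊗ₖ (P * Pᵀ)).PosDef :=
    ((posDef_mul_transpose_self_of_rank_eq (hQ.trans (Fintype.card_fin m).symm)).kronecker
      PosDef.one).add_posSemidef (PosSemidef.one.kronecker (posSemidef_mul_transpose_self P))
  rw [hessH_eq_neg_transpose_mul_self, rank_neg, rank_transpose_mul_self,
    ← rank_self_mul_transpose, jacobianMulTranspose_mul_transpose, rank_of_isUnit _ hpos.isUnit,
    Fintype.card_prod, Fintype.card_fin, Fintype.card_fin]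

end Hessian

theorem stmt18_general {n m k : ℕ}
    (P : Matrix (Fin n) (Fin k) ℝ) (Q : Matrix (Fin m) (Fin k) ℝ) :
    -- H is negative semidefinite:
    (-(hessH P Q)).PosSemidef ∧
    -- every nonzero eigenvalue of H is of the form −σᵢ(Q)² or −(σᵢ(Q)² + σⱼ(P)²),
    -- where σᵢ(Q)², σⱼ(P)² are (nonzero) eigenvalues of QQᵀ and PPᵀ:
    (∀ μ : ℝ, (∃ x : ((Fin k × Fin n) ⊕ (Fin k × Fin m)) → ℝ,
        x ≠ 0 ∧ hessH P Q *ᵥ x = μ • x) → μ ≠ 0 →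
      ∃ a : ℝ, (∃ u : Fin m → ℝ, u ≠ 0 ∧ (Q * Qᵀ) *ᵥ u = a • u) ∧
        (μ = -a ∨ ∃ c : ℝ, (∃ w : Fin n → ℝ, w ≠ 0 ∧ (P * Pᵀ) *ᵥ w = c • w) ∧
          μ = -(a + c))) ∧
    -- the kernel of H has dimension (m+n)k − mn when rank(PQᵀ) = m:
    ((P * Qᵀ).rank = m → (hessH P Q).rank = m * n) := by
  refine ⟨posSemidef_neg_hessH P Q, ?_, fun hrank => rank_hessH_of_rank_eq P ?_⟩
  · rintro μ ⟨x, hx0, hx⟩ hμ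
    obtain ⟨a, c, hu, hw, hμac⟩ := exists_eq_neg_add_of_hessH_mulVec_eq_smul hμ hx0 hx
    exact ⟨a, hu, Or.inr ⟨c, hw, hμac⟩⟩
  · refine le_antisymm (Q.rank_le_card_height.trans_eq (Fintype.card_fin m)) ?_
    calc m = (P * Qᵀ).rank := hrank.symm
      _ ≤ Qᵀ.rank := rank_mul_le_right P Qᵀ
      _ = Q.rank := rank_transpose Q

theorem stmt18 {n m k : ℕ} (Y : Matrix (Fin n) (Fin m) ℝ)
    (P : Matrix (Fin n) (Fin k) ℝ) (Q : Matrix (Fin m) (Fin k) ℝ)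
    (htarget : Y = P * Qᵀ) :
    -- H is negative semidefinite:
    (-(hessH P Q)).PosSemidef ∧
    -- every nonzero eigenvalue of H is of the form −σᵢ(Q)² or −(σᵢ(Q)² + σⱼ(P)²),
    -- where σᵢ(Q)², σⱼ(P)² are (nonzero) eigenvalues of QQᵀ and PPᵀ:
    (∀ μ : ℝ, (∃ x : ((Fin k × Fin n) ⊕ (Fin k × Fin m)) → ℝ,
        x ≠ 0 ∧ hessH P Q *ᵥ x = μ • x) → μ ≠ 0 →
      ∃ a : ℝ, (∃ u : Fin m → ℝ, u ≠ 0 ∧ (Q * Qᵀ) *ᵥ u = a • u) ∧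
        (μ = -a ∨ ∃ c : ℝ, (∃ w : Fin n → ℝ, w ≠ 0 ∧ (P * Pᵀ) *ᵥ w = c • w) ∧
          μ = -(a + c))) ∧
    -- the kernel of H has dimension (m+n)k − mn when rank(PQᵀ) = m:
    ((P * Qᵀ).rank = m → (hessH P Q).rank = m * n) :=
  stmt18_general P Q
end
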